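/- Sufficiency direction of the ESPC theorem: if there exist finite α* ≥ 0 and β* ≥ 0 such that for all α** > α* and β** > β* (componentwise) the extended saddle-point condition L_m(z*, α, β) ≤ L_m(z*, α**, β**) ≤ L_m(z, α**, β**) holds for all z ∈ N(z*), all α ∈ ℝ^m_{≥0}, and all β ∈ ℝ^r_{≥0}, then z* is a constrained local minimum of P_m with respect to N(z*): z* is feasible and f(z*) ≤ f(z) for all feasible z ∈ N(z*). -/

import Mathlib

open Finset in
/-- The ℓ1-penalty function. -/
noncomputable def Lm {Z : Type*} {m r : ℕ} (f : Z → ℝ) (h : Z → Fin m → ℝ) (g : Z → Fin r → ℝ)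
    (z : Z) (α : Fin m → ℝ) (β : Fin r → ℝ) : ℝ :=
  f z + ∑ i, α i * |h z i| + ∑ j, β j * max 0 (g z j)

/-! The first saddle-point inequality bounds `L_m(z*, ·, ·)` above on the nonnegative orthant,
which is only possible if every penalty term vanishes at `z*`, i.e. `z*` is feasible. At feasible
points `L_m` coincides with `f`, so the second inequality becomes `f z* ≤ f z`. -/

section Penalty

variable {Z : Type*} {m r : ℕ} (f : Z → ℝ) (h : Z → Fin m → ℝ) (g : Z → Fin r → ℝ)

theorem Lm_eq_of_feasible {z : Z} (hh : ∀ i, h z i = 0) (hg : ∀ j, g z j ≤ 0)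
    (α : Fin m → ℝ) (β : Fin r → ℝ) : Lm f h g z α β = f z := by
  simp [Lm, hh, fun j => max_eq_left (hg j)]

theorem Lm_single_zero (z : Z) (i : Fin m) (t : ℝ) :
    Lm f h g z (Pi.single i t) 0 = f z + t * |h z i| := by
  simp [Lm, Pi.single_apply]

theorem Lm_zero_single (z : Z) (j : Fin r) (t : ℝ) :
    Lm f h g z 0 (Pi.single j t) = f z + t * max 0 (g z j) := by
  simp [Lm, Pi.single_apply]

theorem nonpos_of_forall_nonneg_mul_le {b C : ℝ} (hC : ∀ t, 0 ≤ t → t * b ≤ C) : b ≤ 0 := by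
  by_contra! hb
  have := hC ((|C| + 1) / b) (by positivity)
  rw [div_mul_cancel₀ _ hb.ne'] at this
  linarith [le_abs_self C]

theorem feasible_of_forall_Lm_le {z : Z} {C : ℝ}
    (hC : ∀ (α : Fin m → ℝ) (β : Fin r → ℝ), 0 ≤ α → 0 ≤ β → Lm f h g z α β ≤ C) :
    (∀ i, h z i = 0) ∧ (∀ j, g z j ≤ 0) := by
  constructor
  · intro i
    have hle : |h z i| ≤ 0 := nonpos_of_forall_nonneg_mul_le (C := C - f z) fun t ht => by
      have := hC (Pi.single i t) 0 (Pi.single_nonneg.2 ht) le_rfl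
      rw [Lm_single_zero] at this
      linarith
    exact abs_nonpos_iff.1 hle
  · intro j
    have hle : max 0 (g z j) ≤ 0 := nonpos_of_forall_nonneg_mul_le (C := C - f z) fun t ht => by
      have := hC 0 (Pi.single j t) le_rfl (Pi.single_nonneg.2 ht)
      rw [Lm_zero_single] at this
      linarith
    exact (le_max_right _ _).trans hle

end Penalty

theorem espc_sufficient_general {Z : Type*} {m r : ℕ} (f : Z → ℝ) (h : Z → Fin m → ℝ)
    (g : Z → Fin r → ℝ) (zstar : Z) (N : Set Z)
    (αstar : Fin m → ℝ) (βstar : Fin r → ℝ)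
    (hespc : ∀ (αss : Fin m → ℝ) (βss : Fin r → ℝ),
      (∀ i, αstar i < αss i) → (∀ j, βstar j < βss j) →
      (∀ (α : Fin m → ℝ) (β : Fin r → ℝ), (∀ i, 0 ≤ α i) → (∀ j, 0 ≤ β j) →
        Lm f h g zstar α β ≤ Lm f h g zstar αss βss) ∧
      (∀ z ∈ N, Lm f h g zstar αss βss ≤ Lm f h g z αss βss)) :
    ((∀ i, h zstar i = 0) ∧ (∀ j, g zstar j ≤ 0)) ∧
      (∀ z ∈ N, (∀ i, h z i = 0) → (∀ j, g z j ≤ 0) → f zstar ≤ f z) := by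
  obtain ⟨hbounded, hminimal⟩ :=
    hespc (αstar + 1) (βstar + 1) (fun _ => lt_add_one _) (fun _ => lt_add_one _)
  obtain ⟨hhstar, hgstar⟩ := feasible_of_forall_Lm_le f h g hbounded
  refine ⟨⟨hhstar, hgstar⟩, fun z hz hhz hgz => ?_⟩
  have := hminimal z hz
  rwa [Lm_eq_of_feasible f h g hhstar hgstar, Lm_eq_of_feasible f h g hhz hgz] at this

/-- Sufficiency direction of the ESPC theorem. -/
theorem espc_sufficient {Z : Type*} {m r : ℕ} (f : Z → ℝ) (h : Z → Fin m → ℝ)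
    (g : Z → Fin r → ℝ) (zstar : Z) (N : Set Z)
    (hbdd : BddBelow (Set.range f))
    (αstar : Fin m → ℝ) (βstar : Fin r → ℝ)
    (hαstar : ∀ i, 0 ≤ αstar i) (hβstar : ∀ j, 0 ≤ βstar j)
    (hespc : ∀ (αss : Fin m → ℝ) (βss : Fin r → ℝ),
      (∀ i, αstar i < αss i) → (∀ j, βstar j < βss j) →
      (∀ (α : Fin m → ℝ) (β : Fin r → ℝ), (∀ i, 0 ≤ α i) → (∀ j, 0 ≤ β j) →
        Lm f h g zstar α β ≤ Lm f h g zstar αss βss) ∧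
      (∀ z ∈ N, Lm f h g zstar αss βss ≤ Lm f h g z αss βss)) :
    ((∀ i, h zstar i = 0) ∧ (∀ j, g zstar j ≤ 0)) ∧
      (∀ z ∈ N, (∀ i, h z i = 0) → (∀ j, g z j ≤ 0) → f zstar ≤ f z) :=
  espc_sufficient_general f h g zstar N αstar βstar hespc
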